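/- Let X be a subgroup of (ℤ/Mℤ)^K with Construction A lattice Λ = X + Mℤ^K. If every shortest nonzero vector of Λ lies in Mℤ^K, then the minimum Euclidean distance of every coset (t + X) mod M is at least M. -/
import Mathlib


/-- Centered representative (in `Z_M ⊂ ℤ`) of an element of `ℤ/Mℤ`. -/
def centRep {M : ℕ} (a : ZMod M) : ℤ := Int.bmod (a.val : ℤ) M

/-- Componentwise centered embedding of `(ℤ/Mℤ)^K` into `ℤ^K`. -/
def centEmb {M K : ℕ} (x : Fin K → ZMod M) : Fin K → ℤ := fun i => centRep (x i)

/-- Euclidean norm of a vector in `ℤ^K`. -/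
noncomputable def intNorm {K : ℕ} (v : Fin K → ℤ) : ℝ :=
  Real.sqrt (∑ i, ((v i : ℝ)) ^ 2)

lemma centRep_cast {M : ℕ} (hM : 1 ≤ M) (a : ZMod M) :
    ((centRep a : ℤ) : ZMod M) = a := by
  haveI : NeZero M := ⟨by omega⟩
  unfold centRep
  calc ((Int.bmod (a.val : ℤ) M : ℤ) : ZMod M) = (((a.val : ℤ)) : ZMod M) := by
        rw [ZMod.intCast_eq_intCast_iff']
        simp [Int.bmod_emod]
    _ = a := by push_cast; simp [ZMod.natCast_val, ZMod.cast_id]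

lemma intNorm_eq_sqrt_natAbs {K : ℕ} (v : Fin K → ℤ) :
    intNorm v = Real.sqrt ((∑ i, (v i).natAbs ^ 2 : ℕ) : ℝ) := by
  unfold intNorm
  congr 1
  push_cast
  refine Finset.sum_congr rfl fun i _ => ?_
  rw [Nat.cast_natAbs]
  simp [sq_abs]

/-- Lemma 1 (second part): if every shortest nonzero vector of the
Construction A lattice `Λ = X + Mℤ^K` lies in `Mℤ^K`, then the minimum
distance of every coset `(t + X) mod M` is at least `M`. -/
theorem coset_dmin_ge_M (M K : ℕ) (hM : 1 ≤ M)
    (X : AddSubgroup (Fin K → ZMod M))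
    (hshort : ∀ w : Fin K → ℤ,
      (fun i => ((w i : ZMod M))) ∈ X → w ≠ 0 →
      (∀ v : Fin K → ℤ,
        (fun i => ((v i : ZMod M))) ∈ X → v ≠ 0 → intNorm w ≤ intNorm v) →
      ∀ i, (M : ℤ) ∣ w i)
    (t : Fin K → ZMod M) (x y : Fin K → ZMod M)
    (hx : x ∈ X) (hy : y ∈ X) (hxy : x ≠ y) :
    (M : ℝ) ≤ intNorm (centEmb (t + x) - centEmb (t + y)) := by
  set w : Fin K → ℤ := centEmb (t + x) - centEmb (t + y) with hw
  have hwcast : (fun i => ((w i : ZMod M))) = x - y := by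
    funext i
    simp [hw, centEmb, centRep_cast hM]
  have hwX : (fun i => ((w i : ZMod M))) ∈ X := by
    rw [hwcast]; exact sub_mem hx hy
  have hwne : w ≠ 0 := by
    intro h
    apply hxy
    have : (x : Fin K → ZMod M) - y = 0 := by
      rw [← hwcast, h]; funext i; simp
    funext i
    have h2 := congrFun this i
    simp only [Pi.sub_apply, sub_eq_zero, Pi.zero_apply] at h2
    exact h2
  -- set of squared norms of nonzero lattice vectors
  set S : Set ℕ := {n | ∃ v : Fin K → ℤ,
    ((fun i => ((v i : ZMod M))) ∈ X ∧ v ≠ 0) ∧ (∑ i, (v i).natAbs ^ 2) = n} with hS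
  have hSne : (∑ i, (w i).natAbs ^ 2) ∈ S := ⟨w, ⟨hwX, hwne⟩, rfl⟩
  obtain ⟨u, ⟨huX, hune⟩, hu⟩ := Nat.sInf_mem ⟨_, hSne⟩
  have humin : ∀ v : Fin K → ℤ,
      (fun i => ((v i : ZMod M))) ∈ X → v ≠ 0 → intNorm u ≤ intNorm v := by
    intro v hvX hvne
    rw [intNorm_eq_sqrt_natAbs, intNorm_eq_sqrt_natAbs]
    apply Real.sqrt_le_sqrt
    have : sInf S ≤ ∑ i, (v i).natAbs ^ 2 := Nat.sInf_le ⟨v, ⟨hvX, hvne⟩, rfl⟩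
    rw [hu]
    exact_mod_cast this
  have hdvd := hshort u huX hune humin
  -- some coordinate of u is nonzero, hence has |u i| ≥ M
  obtain ⟨i, hi⟩ : ∃ i, u i ≠ 0 := by
    by_contra h
    push_neg at h
    exact hune (funext h)
  have hMle : (M : ℝ) ≤ |(u i : ℝ)| := by
    have h1 : (M : ℤ) ≤ |u i| := Int.le_of_dvd (abs_pos.mpr hi) ((dvd_abs _ _).mpr (hdvd i))
    calc (M : ℝ) ≤ ((|u i| : ℤ) : ℝ) := by exact_mod_cast h1
      _ = |(u i : ℝ)| := by push_cast; rfl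
  have hnormu : (M : ℝ) ≤ intNorm u := by
    unfold intNorm
    have h2 : ((u i : ℝ)) ^ 2 ≤ ∑ j, ((u j : ℝ)) ^ 2 :=
      Finset.single_le_sum (f := fun j => ((u j : ℝ)) ^ 2) (fun j _ => sq_nonneg _) (Finset.mem_univ i)
    calc (M : ℝ) ≤ |(u i : ℝ)| := hMle
      _ = Real.sqrt (((u i : ℝ)) ^ 2) := (Real.sqrt_sq_eq_abs _).symm
      _ ≤ Real.sqrt (∑ j, ((u j : ℝ)) ^ 2) := Real.sqrt_le_sqrt h2
  exact hnormu.trans (humin w hwX hwne)
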